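/- Let Γ be a strictly Deza graph with parameters (n, k, b, a) with k = b + 1 and β(v) > 1 for every vertex v. If v is a vertex of type (B) or of type (C), then for every vertex u ∈ N(v) \ B(v), B[u] ⊆ N(v) \ B(v). -/

import Mathlib

open Finset SimpleGraph

universe u v

/-- The number of common neighbours of two vertices. -/
def commonNbrs {V : Type u} [Fintype V] [DecidableEq V] (G : SimpleGraph V)
    [DecidableRel G.Adj] (x y : V) : ℕ :=
  (G.neighborFinset x ∩ G.neighborFinset y).card

/-- `G` is a Deza graph with parameters `(n, k, b, a)`: a nonempty `k`-regular graph on `n`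
vertices in which any two distinct vertices have either `b` or `a` common neighbours,
where `b ≥ a`. -/
def IsDezaGraph {V : Type u} [Fintype V] [DecidableEq V] (G : SimpleGraph V)
    [DecidableRel G.Adj] (n k b a : ℕ) : Prop :=
  G ≠ ⊥ ∧ Fintype.card V = n ∧ G.IsRegularOfDegree k ∧ a ≤ b ∧
    ∀ x y : V, x ≠ y → commonNbrs G x y = b ∨ commonNbrs G x y = a

/-- `G` is a strictly Deza graph with parameters `(n, k, b, a)`: a Deza graph of
diameter 2 that is not strongly regular. -/
def IsStrictlyDezaGraph {V : Type u} [Fintype V] [DecidableEq V] (G : SimpleGraph V)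
    [DecidableRel G.Adj] (n k b a : ℕ) : Prop :=
  IsDezaGraph G n k b a ∧ G.Connected ∧ (∀ x y : V, G.dist x y ≤ 2) ∧
    (∃ x y : V, G.dist x y = 2) ∧ ¬ ∃ ℓ μ : ℕ, G.IsSRGWith n k ℓ μ

/-- `B(v)`: the set of vertices `u ≠ v` having exactly `b` common neighbours with `v`. -/
def dezaB {V : Type u} [Fintype V] [DecidableEq V] (G : SimpleGraph V)
    [DecidableRel G.Adj] (b : ℕ) (v : V) : Finset V :=
  univ.filter fun u => u ≠ v ∧ commonNbrs G u v = b

/-- `A(v)`: the set of vertices `u ≠ v` having exactly `a` common neighbours with `v`. -/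
def dezaA {V : Type u} [Fintype V] [DecidableEq V] (G : SimpleGraph V)
    [DecidableRel G.Adj] (a : ℕ) (v : V) : Finset V :=
  univ.filter fun u => u ≠ v ∧ commonNbrs G u v = a

/-- `B[v] = B(v) ∪ {v}`. -/
def dezaBc {V : Type u} [Fintype V] [DecidableEq V] (G : SimpleGraph V)
    [DecidableRel G.Adj] (b : ℕ) (v : V) : Finset V :=
  insert v (dezaB G b v)

/-- A vertex `v` is of type (A) if `B(v) ∩ N(v) = ∅`. -/
def IsTypeA {V : Type u} [Fintype V] [DecidableEq V] (G : SimpleGraph V)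
    [DecidableRel G.Adj] (b : ℕ) (v : V) : Prop :=
  dezaB G b v ∩ G.neighborFinset v = ∅

/-- A vertex `v` is of type (B) if `B(v) ⊆ N(v)`. -/
def IsTypeB {V : Type u} [Fintype V] [DecidableEq V] (G : SimpleGraph V)
    [DecidableRel G.Adj] (b : ℕ) (v : V) : Prop :=
  dezaB G b v ⊆ G.neighborFinset v

/-- A vertex `v` is of type (C) if `|B(v) ∩ N(v)| = 1`. -/
def IsTypeC {V : Type u} [Fintype V] [DecidableEq V] (G : SimpleGraph V)
    [DecidableRel G.Adj] (b : ℕ) (v : V) : Prop :=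
  (dezaB G b v ∩ G.neighborFinset v).card = 1

/-- A vertex `x` of type (A) is of type (A1) if there exists `y ∈ N(x)` with
`N(x) \ N(xᵢ) = {y}` for every `xᵢ ∈ B(x)`. -/
def IsTypeA1 {V : Type u} [Fintype V] [DecidableEq V] (G : SimpleGraph V)
    [DecidableRel G.Adj] (b : ℕ) (x : V) : Prop :=
  IsTypeA G b x ∧ ∃ y ∈ G.neighborFinset x,
    ∀ xi ∈ dezaB G b x, G.neighborFinset x \ G.neighborFinset xi = {y}

/-- A vertex `x` of type (A) is of type (A2) if there exists `z ∉ N[x]` with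
`N(xᵢ) \ N(x) = {z}` for every `xᵢ ∈ B(x)`. -/
def IsTypeA2 {V : Type u} [Fintype V] [DecidableEq V] (G : SimpleGraph V)
    [DecidableRel G.Adj] (b : ℕ) (x : V) : Prop :=
  IsTypeA G b x ∧ ∃ z ∉ insert x (G.neighborFinset x),
    ∀ xi ∈ dezaB G b x, G.neighborFinset xi \ G.neighborFinset x = {z}

/-- The complete multipartite graph with `m` parts of size `t`. -/
def completeMultipartiteGr (m t : ℕ) : SimpleGraph (Fin m × Fin t) where
  Adj u v := u.1 ≠ v.1
  symm := ⟨fun _ _ h => Ne.symm h⟩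
  loopless := ⟨fun _ h => h rfl⟩

/-- The 2-clique extension of a graph `H`: vertices `(u, i)` and `(v, j)` are adjacent
iff `u ~ v` in `H`, or `u = v` and `i ≠ j`. -/
def cliqueExt2 {W : Type v} (H : SimpleGraph W) : SimpleGraph (W × Fin 2) where
  Adj u v := H.Adj u.1 v.1 ∨ (u.1 = v.1 ∧ u.2 ≠ v.2)
  symm := by
    constructor
    intro u v h
    rcases h with h | ⟨h1, h2⟩
    · exact Or.inl h.symm
    · exact Or.inr ⟨h1.symm, h2.symm⟩
  loopless := by
    constructor
    intro u h
    rcases h with h | ⟨_, h2⟩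
    · exact H.irrefl h
    · exact h2 rfl

/-!
Since `k = b + 1`, two adjacent vertices with `b` common neighbours are closed twins, and closed
twins `t, x` have equally many common neighbours with every third vertex (swap `t` and `x`).
Take `s ∈ B(x) ∩ N(x)`, so `N[s] = N[x]`, and `t ∈ B(u)` for `u ∈ N(x) \ B(x)`. Then `u` has a
single neighbour outside `N(t)`; if `t ≁ x` that neighbour is `x`, so `t ~ s` and hence `t ~ x`.
If moreover `t ∈ B(x)`, then `t` is a twin of `x`, so `|N(t) ∩ N(u)| = |N(x) ∩ N(u)| ≠ b`.
-/

section RegularTwins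

variable {V : Type u} [Fintype V] [DecidableEq V] {G : SimpleGraph V} [DecidableRel G.Adj]
  {b : ℕ} {s t u x : V}

lemma commonNbrs_comm (x y : V) : commonNbrs G x y = commonNbrs G y x := by
  rw [commonNbrs, commonNbrs, inter_comm]

lemma mem_dezaB : u ∈ dezaB G b x ↔ u ≠ x ∧ commonNbrs G u x = b := by
  simp [dezaB]

lemma IsTypeB.nonempty_dezaB_inter (hx : IsTypeB G b x) (hβ : (dezaB G b x).Nonempty) :
    (dezaB G b x ∩ G.neighborFinset x).Nonempty := by
  rwa [inter_eq_left.mpr hx]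

lemma IsTypeC.nonempty_dezaB_inter (hx : IsTypeC G b x) :
    (dezaB G b x ∩ G.neighborFinset x).Nonempty :=
  card_pos.mp (by rw [hx]; exact Nat.one_pos)

lemma card_neighborFinset_sdiff_of_commonNbrs (hreg : G.IsRegularOfDegree (b + 1))
    (hb : commonNbrs G u t = b) : (G.neighborFinset u \ G.neighborFinset t).card = 1 := by
  have := card_sdiff_add_card_inter (G.neighborFinset u) (G.neighborFinset t)
  rw [card_neighborFinset_eq_degree, hreg u] at this
  unfold commonNbrs at hb
  omega

/-- That is, `N[s] = N[x]`. -/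
lemma erase_neighborFinset_eq_of_commonNbrs (hreg : G.IsRegularOfDegree (b + 1))
    (hsx : G.Adj s x) (hb : commonNbrs G s x = b) :
    (G.neighborFinset s).erase x = (G.neighborFinset x).erase s := by
  have hcard : ∀ {y z : V}, G.Adj y z → ((G.neighborFinset z).erase y).card = b := fun h => by
    rw [card_erase_of_mem (by simpa using h.symm), card_neighborFinset_eq_degree, hreg]; rfl
  have hsub : ∀ {y z : V},
      G.neighborFinset y ∩ G.neighborFinset z ⊆ (G.neighborFinset z).erase y := by
    intro y z w hw
    obtain ⟨hyw, hzw⟩ := mem_inter.mp hw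
    exact mem_erase.mpr ⟨fun h => G.notMem_neighborFinset_self y (h ▸ hyw), hzw⟩
  have hs : G.neighborFinset s ∩ G.neighborFinset x = (G.neighborFinset x).erase s :=
    eq_of_subset_of_card_le hsub (by rw [hcard hsx]; exact hb.ge)
  have hx : G.neighborFinset x ∩ G.neighborFinset s = (G.neighborFinset s).erase x :=
    eq_of_subset_of_card_le hsub (by rw [hcard hsx.symm, inter_comm]; exact hb.ge)
  rw [← hs, ← hx, inter_comm]

lemma adj_iff_of_erase_neighborFinset_eq
    (htw : (G.neighborFinset t).erase x = (G.neighborFinset x).erase t) {w : V}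
    (hwt : w ≠ t) (hwx : w ≠ x) : G.Adj t w ↔ G.Adj x w := by
  have := congrArg (w ∈ ·) htw
  simpa [hwt, hwx] using this

/-- `swap t x` maps `N(t) ∩ N(u)` onto `N(x) ∩ N(u)`. -/
lemma commonNbrs_eq_of_erase_neighborFinset_eq
    (htw : (G.neighborFinset t).erase x = (G.neighborFinset x).erase t)
    (hut : u ≠ t) (hux : u ≠ x) : commonNbrs G t u = commonNbrs G x u := by
  have hu := adj_iff_of_erase_neighborFinset_eq htw hut hux
  rw [commonNbrs, commonNbrs, ← card_map (Equiv.swap t x).toEmbedding]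
  congr 1
  ext w
  simp only [mem_map_equiv, Equiv.symm_swap, mem_inter, mem_neighborFinset]
  rcases eq_or_ne w t with hwt | hwt
  · rw [hwt, Equiv.swap_apply_left, G.adj_comm t x, G.adj_comm u x, G.adj_comm u t, hu]
  rcases eq_or_ne w x with hwx | hwx
  · simp [hwx]
  rw [Equiv.swap_apply_of_ne_of_ne hwt hwx, adj_iff_of_erase_neighborFinset_eq htw hwt hwx]

lemma adj_of_mem_dezaB_of_erase_neighborFinset_eq (hreg : G.IsRegularOfDegree (b + 1))
    (hsx : G.Adj s x) (htw : (G.neighborFinset s).erase x = (G.neighborFinset x).erase s)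
    (hxu : G.Adj x u) (hus : u ≠ s) (hux : u ∉ dezaB G b x) (htu : t ∈ dezaB G b u) :
    G.Adj x t := by
  obtain ⟨-, hb⟩ := mem_dezaB.mp htu
  have htx : t ≠ x := by
    rintro rfl
    exact hux (mem_dezaB.mpr ⟨hxu.ne', by rwa [commonNbrs_comm]⟩)
  have hsu : G.Adj s u := (adj_iff_of_erase_neighborFinset_eq htw hus hxu.ne').mpr hxu
  by_contra hxt
  -- `u` has a single neighbour outside `N(t)`, and `x` is one, so `s` is not.
  have hone := card_neighborFinset_sdiff_of_commonNbrs hreg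
    (by rwa [commonNbrs_comm] : commonNbrs G u t = b)
  have hts : G.Adj t s := by
    by_contra hts
    exact hsx.ne (card_le_one.mp hone.le s (by simp [hsu.symm, hts]) x
      (by simp [hxu.symm, G.adj_comm t x, hxt]))
  exact hxt ((adj_iff_of_erase_neighborFinset_eq htw hts.ne htx).mp hts.symm)

lemma notMem_dezaB_of_adj_of_mem_dezaB (hreg : G.IsRegularOfDegree (b + 1)) (hxt : G.Adj x t)
    (hux : u ≠ x) (huB : u ∉ dezaB G b x) (htu : t ∈ dezaB G b u) : t ∉ dezaB G b x := by
  intro htx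
  obtain ⟨htu, hb⟩ := mem_dezaB.mp htu
  have htw := erase_neighborFinset_eq_of_commonNbrs hreg hxt.symm (mem_dezaB.mp htx).2
  have := commonNbrs_eq_of_erase_neighborFinset_eq htw htu.symm hux
  exact huB (mem_dezaB.mpr ⟨hux, by rw [commonNbrs_comm, ← this, hb]⟩)

theorem dezaBc_subset_sdiff_of_mem_dezaB_inter (hreg : G.IsRegularOfDegree (b + 1))
    (hs : s ∈ dezaB G b x ∩ G.neighborFinset x) (hu : u ∈ G.neighborFinset x \ dezaB G b x) :
    dezaBc G b u ⊆ G.neighborFinset x \ dezaB G b x := by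
  obtain ⟨hsB, hxs⟩ := mem_inter.mp hs
  obtain ⟨hxu, huB⟩ := mem_sdiff.mp hu
  rw [mem_neighborFinset] at hxs hxu
  have htw := erase_neighborFinset_eq_of_commonNbrs hreg hxs.symm (mem_dezaB.mp hsB).2
  intro t ht
  rcases mem_insert.mp ht with rfl | htu
  · exact hu
  have hxt := adj_of_mem_dezaB_of_erase_neighborFinset_eq hreg hxs.symm htw hxu
    (fun h => huB (h ▸ hsB)) huB htu
  exact mem_sdiff.mpr ⟨(G.mem_neighborFinset x t).mpr hxt,
    notMem_dezaB_of_adj_of_mem_dezaB hreg hxt hxu.ne' huB htu⟩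

end RegularTwins

theorem stmt15 {V : Type u} [Fintype V] [DecidableEq V] (G : SimpleGraph V)
    [DecidableRel G.Adj] (n k b a : ℕ)
    (hG : IsStrictlyDezaGraph G n k b a) (hk : k = b + 1)
    (hβ : ∀ v : V, 1 < (dezaB G b v).card) :
    ∀ x : V, (IsTypeB G b x ∨ IsTypeC G b x) →
      ∀ u ∈ G.neighborFinset x \ dezaB G b x,
        dezaBc G b u ⊆ G.neighborFinset x \ dezaB G b x := by
  intro x hx u hu
  obtain ⟨s, hs⟩ : (dezaB G b x ∩ G.neighborFinset x).Nonempty :=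
    hx.elim (·.nonempty_dezaB_inter (card_pos.mp (Nat.one_pos.trans (hβ x))))
      (·.nonempty_dezaB_inter)
  exact dezaBc_subset_sdiff_of_mem_dezaB_inter (hk ▸ hG.1.2.2.1) hs hu
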